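/- Let n > m, n > m', and m ≠ m'. Then the distinguishing number of the join K_{n,m} + K_{n,m'} of the complete bipartite graphs K_{n,m} and K_{n,m'} equals n + 1. -/

import Mathlib

open SimpleGraph

/-- The join of two graphs: disjoint union plus all edges between the parts. -/
def joinGraph {V W : Type*} (G : SimpleGraph V) (H : SimpleGraph W) : SimpleGraph (V ⊕ W) where
  Adj x y :=
    match x, y with
    | Sum.inl a, Sum.inl b => G.Adj a b
    | Sum.inr a, Sum.inr b => H.Adj a b
    | Sum.inl _, Sum.inr _ => True
    | Sum.inr _, Sum.inl _ => True
  symm := by constructor; rintro (a|a) (b|b) h <;> first | exact h.symm | trivial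
  loopless := by constructor; rintro (a|a) h <;> exact (SimpleGraph.irrefl _) h

instance joinGraphDecidableAdj {V W : Type*} {G : SimpleGraph V} {H : SimpleGraph W}
    [DecidableRel G.Adj] [DecidableRel H.Adj] : DecidableRel (joinGraph G H).Adj
  | Sum.inl a, Sum.inl b => inferInstanceAs (Decidable (G.Adj a b))
  | Sum.inr a, Sum.inr b => inferInstanceAs (Decidable (H.Adj a b))
  | Sum.inl _, Sum.inr _ => Decidable.isTrue trivial
  | Sum.inr _, Sum.inl _ => Decidable.isTrue trivial

/-- The distinguishing number: least `d` admitting a vertex `d`-labeling preserved only by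
the identity automorphism. -/
noncomputable def distinguishingNumber {V : Type*} (G : SimpleGraph V) : ℕ :=
  sInf {d : ℕ | ∃ c : V → Fin d, ∀ f : G ≃g G, (∀ v, c (f v) = c v) → ∀ v, f v = v}

/-- The distinguishing index: least `d` admitting an edge `d`-labeling preserved only by
the identity automorphism. -/
noncomputable def distinguishingIndex {V : Type*} (G : SimpleGraph V) : ℕ :=
  sInf {d : ℕ | ∃ c : Sym2 V → Fin d, ∀ f : G ≃g G,
    (∀ e ∈ G.edgeSet, c (Sym2.map (⇑f) e) = c e) → ∀ v, f v = v}

/-- The non-neighborhood of a vertex. -/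
def nonNbhd {V : Type*} (G : SimpleGraph V) (v : V) : Set V := {u | ¬ G.Adj v u}

/-- The k-fold join of a graph with itself. -/
def kJoin {V : Type*} (G : SimpleGraph V) (k : ℕ) : SimpleGraph (Fin k × V) where
  Adj x y := x.1 ≠ y.1 ∨ (x.1 = y.1 ∧ G.Adj x.2 y.2)
  symm := by
    constructor
    rintro x y (h | ⟨h1, h2⟩)
    · exact Or.inl h.symm
    · exact Or.inr ⟨h1.symm, h2.symm⟩
  loopless := by
    constructor
    rintro x (h | ⟨h1, h2⟩)
    · exact h rfl
    · exact (SimpleGraph.irrefl _) h2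

/-- `n` disjoint copies of `K₂`. -/
def nK2 (n : ℕ) : SimpleGraph (Fin n × Fin 2) where
  Adj x y := x.1 = y.1 ∧ x.2 ≠ y.2
  symm := by constructor; rintro x y ⟨h1, h2⟩; exact ⟨h1.symm, h2.symm⟩
  loopless := by constructor; rintro x ⟨h1, h2⟩; exact h2 rfl

/-- The friendship graph `Fₙ`: the join of `K₁` with `n` copies of `K₂`. -/
def friendshipGraph (n : ℕ) : SimpleGraph (Fin 1 ⊕ (Fin n × Fin 2)) :=
  joinGraph (⊤ : SimpleGraph (Fin 1)) (nK2 n)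

/-- A graph has a Hamiltonian path. -/
def HasHamiltonianPath {V : Type*} [DecidableEq V] (G : SimpleGraph V) : Prop :=
  ∃ (u v : V) (p : G.Walk u v), p.IsHamiltonian

/-!
The join is the complete multipartite graph with parts `A, B, A', B'` of sizes `n, m, n, m'`,
i.e. the pullback of the complete graph on `Fin 4` along the part map, and its automorphisms are
the permutations preserving the partition. A transposition inside a part is an automorphism, so a
distinguishing coloring is injective on each part. With at most `n` colors, `A` and `A'` would
then both be colored bijectively by the same `n` colors, and exchanging `A` with `A'` along the
colors is a nontrivial color-preserving automorphism. Conversely, color `A` by `0, …, n - 1`,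
`A'` by `1, …, n`, and `B`, `B'` by initial segments: the color `n` pins `A'` down, while `B` and
`B'` are the only parts of their sizes, so a color-preserving automorphism fixes every part and
hence every vertex.
-/

def IsDistinguishing {V : Type*} {d : ℕ} (G : SimpleGraph V) (c : V → Fin d) : Prop :=
  ∀ f : G ≃g G, (∀ v, c (f v) = c v) → ∀ v, f v = v

lemma distinguishingNumber_eq {V : Type*} {G : SimpleGraph V} {k : ℕ}
    (hk : ∃ c : V → Fin k, IsDistinguishing G c)
    (hmin : ∀ d (c : V → Fin d), IsDistinguishing G c → k ≤ d) :
    distinguishingNumber G = k :=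
  le_antisymm (Nat.sInf_le hk) (le_csInf ⟨k, hk⟩ fun d ⟨c, hc⟩ => hmin d c hc)

section CompleteMultipartite

variable {V ι : Type*} {p : V → ι}

lemma iso_comap_top_apply_eq_iff
    (f : (⊤ : SimpleGraph ι).comap p ≃g (⊤ : SimpleGraph ι).comap p) (v u : V) :
    p (f v) = p (f u) ↔ p v = p u := by
  simpa using (f.map_adj_iff (v := v) (w := u)).not

def isoComapTopOfPerm (e : Equiv.Perm V) (he : ∀ v u, p (e v) = p (e u) ↔ p v = p u) :
    (⊤ : SimpleGraph ι).comap p ≃g (⊤ : SimpleGraph ι).comap p where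
  toEquiv := e
  map_rel_iff' {v u} := by simpa using (he v u).not

lemma card_fiber_iso_apply (f : (⊤ : SimpleGraph ι).comap p ≃g (⊤ : SimpleGraph ι).comap p)
    (v : V) : Nat.card {u // p u = p (f v)} = Nat.card {u // p u = p v} :=
  Nat.card_congr (f.toEquiv.subtypeEquiv fun u => (iso_comap_top_apply_eq_iff f u v).symm).symm

lemma IsDistinguishing.eq_of_apply_eq {d : ℕ} {c : V → Fin d}
    (hc : IsDistinguishing ((⊤ : SimpleGraph ι).comap p) c) {v u : V} (hp : p v = p u)
    (hcv : c v = c u) : v = u := by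
  classical
  have he v' u' : p (Equiv.swap v u v') = p (Equiv.swap v u u') ↔ p v' = p u' := by
    rw [Equiv.apply_swap_eq_self hp, Equiv.apply_swap_eq_self hp]
  simpa [isoComapTopOfPerm, eq_comm] using
    hc (isoComapTopOfPerm _ he) (Equiv.apply_swap_eq_self hcv) v

end CompleteMultipartite

section JoinCompleteBipartite

variable {α β β' : Type*}

def joinPart : (α ⊕ β) ⊕ (α ⊕ β') → Fin 4
  | .inl (.inl _) => 0
  | .inl (.inr _) => 1
  | .inr (.inl _) => 2
  | .inr (.inr _) => 3

lemma joinGraph_completeBipartiteGraph_eq_comap :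
    joinGraph (completeBipartiteGraph α β) (completeBipartiteGraph α β') =
      (⊤ : SimpleGraph (Fin 4)).comap joinPart := by
  ext ((a | b) | (a | b)) ((a' | b') | (a' | b')) <;>
    simp [joinGraph, completeBipartiteGraph, joinPart]

lemma card_joinPart_fiber [Finite α] [Finite β] [Finite β'] (i : Fin 4) :
    Nat.card {v : (α ⊕ β) ⊕ (α ⊕ β') // joinPart v = i} =
      ![Nat.card α, Nat.card β, Nat.card α, Nat.card β'] i := by
  simp only [Nat.card_congr Equiv.subtypeSum, Nat.card_sum]
  fin_cases i <;> simp [joinPart]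

def exchangeSides (σ : Equiv.Perm α) : Equiv.Perm ((α ⊕ β) ⊕ (α ⊕ β')) :=
  Function.Involutive.toPerm
    (fun
      | .inl (.inl a) => .inr (.inl (σ a))
      | .inr (.inl a) => .inl (.inl (σ.symm a))
      | v => v)
    (by rintro ((a | b) | (a | b)) <;> simp)

lemma joinPart_exchangeSides (σ : Equiv.Perm α) (v : (α ⊕ β) ⊕ (α ⊕ β')) :
    joinPart (exchangeSides σ v) = Equiv.swap 0 2 (joinPart v) := by
  rcases v with (a | b) | (a | b) <;> rfl

lemma card_lt_of_isDistinguishing [Finite α] [Nonempty α] {d : ℕ}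
    {c : (α ⊕ β) ⊕ (α ⊕ β') → Fin d}
    (hc : IsDistinguishing
      (joinGraph (completeBipartiteGraph α β) (completeBipartiteGraph α β')) c) :
    Nat.card α < d := by
  rw [joinGraph_completeBipartiteGraph_eq_comap] at hc
  by_contra! hd
  have bij_of_inj {g : α → Fin d} (hg : g.Injective) : g.Bijective :=
    (Nat.bijective_iff_injective_and_card g).2
      ⟨hg, le_antisymm (Nat.card_le_card_of_injective g hg) (by simpa using hd)⟩
  have injA : Function.Injective fun a : α => c (.inl (.inl a)) := fun a b h => by
    simpa using hc.eq_of_apply_eq (v := .inl (.inl a)) (u := .inl (.inl b)) rfl h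
  have injA' : Function.Injective fun a : α => c (.inr (.inl a)) := fun a b h => by
    simpa using hc.eq_of_apply_eq (v := .inr (.inl a)) (u := .inr (.inl b)) rfl h
  set gA := Equiv.ofBijective _ (bij_of_inj injA)
  set gA' := Equiv.ofBijective _ (bij_of_inj injA')
  set e : Equiv.Perm ((α ⊕ β) ⊕ (α ⊕ β')) := exchangeSides (gA.trans gA'.symm)
  have he v u : joinPart (e v) = joinPart (e u) ↔ joinPart v = joinPart u := by
    simp only [e, joinPart_exchangeSides, EmbeddingLike.apply_eq_iff_eq]
  have hce v : c (e v) = c v := by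
    rcases v with (a | b) | (a | b)
    · exact gA'.apply_symm_apply (gA a)
    · rfl
    · exact gA.apply_symm_apply (gA' a)
    · rfl
  obtain ⟨a⟩ := ‹Nonempty α›
  simpa [isoComapTopOfPerm, e, exchangeSides] using
    hc (isoComapTopOfPerm e he) hce (.inl (.inl a))

end JoinCompleteBipartite

section Coloring

variable {n m m' : ℕ} (h1 : m < n) (h2 : m' < n)

def joinColoring : (Fin n ⊕ Fin m) ⊕ (Fin n ⊕ Fin m') → Fin (n + 1)
  | .inl (.inl a) => a.castSucc
  | .inl (.inr b) => b.castLE (by omega)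
  | .inr (.inl a) => a.succ
  | .inr (.inr b) => b.castLE (by omega)

lemma eq_of_joinPart_eq_of_joinColoring_eq {v u : (Fin n ⊕ Fin m) ⊕ (Fin n ⊕ Fin m')}
    (hp : joinPart v = joinPart u) (hc : joinColoring h1 h2 v = joinColoring h1 h2 u) : v = u := by
  rcases v with (a | b) | (a | b) <;> rcases u with (a' | b') | (a' | b') <;>
    simp_all [joinPart, joinColoring, Fin.ext_iff]

lemma joinPart_eq_two_of_joinColoring_eq_last {v : (Fin n ⊕ Fin m) ⊕ (Fin n ⊕ Fin m')}
    (hv : joinColoring h1 h2 v = Fin.last n) : joinPart v = 2 := by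
  rcases v with (a | b) | (a | b) <;> simp [joinColoring, joinPart, Fin.ext_iff] at hv ⊢ <;> omega

lemma isDistinguishing_joinColoring (h3 : m ≠ m') :
    IsDistinguishing (joinGraph (completeBipartiteGraph (Fin n) (Fin m))
      (completeBipartiteGraph (Fin n) (Fin m'))) (joinColoring h1 h2) := by
  rw [joinGraph_completeBipartiteGraph_eq_comap]
  intro f hf v
  refine eq_of_joinPart_eq_of_joinColoring_eq h1 h2 ?_ (hf v)
  let top : (Fin n ⊕ Fin m) ⊕ (Fin n ⊕ Fin m') := .inr (.inl ⟨n - 1, by omega⟩)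
  have htop : joinPart (f top) = 2 := by
    refine joinPart_eq_two_of_joinColoring_eq_last h1 h2 ?_
    rw [hf]; ext; simp [top, joinColoring]; omega
  have hA' : joinPart (f v) = 2 ↔ joinPart v = 2 := by
    have h := iso_comap_top_apply_eq_iff f v top
    rwa [htop] at h
  have hcard := card_fiber_iso_apply f v
  simp only [card_joinPart_fiber, Nat.card_fin] at hcard
  -- the part sizes `n, m, n, m'` are distinct apart from the two `n`'s, which `hA'` tells apart
  generalize joinPart (f v) = j at hA' hcard ⊢
  generalize joinPart v = i at hA' hcard ⊢
  fin_cases i <;> fin_cases j <;> simp at hA' hcard ⊢ <;> omega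

end Coloring

theorem distinguishingNumber_join_completeBipartite (n m m' : ℕ)
    (h1 : m < n) (h2 : m' < n) (h3 : m ≠ m') :
    distinguishingNumber (joinGraph (completeBipartiteGraph (Fin n) (Fin m))
      (completeBipartiteGraph (Fin n) (Fin m'))) = n + 1 := by
  have : Nonempty (Fin n) := ⟨⟨0, by omega⟩⟩
  refine distinguishingNumber_eq ⟨_, isDistinguishing_joinColoring h1 h2 h3⟩ fun d c hc => ?_
  simpa using card_lt_of_isDistinguishing hc
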